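/- Let q, x be complex numbers with |q| < 1 and let F_2(x,q) = ∑_{λ ∈ STR} x^{ℓ(λ)} q^{|λ|_2}, the sum (which converges absolutely) running over all strict partitions λ. Then q^3 F_2(x,q) = (1 + q^3 − x q^3 + x q^6 + x^2 q^7 + x^2 q^8) F_2(x q^3, q) − (1 − x q^3)(1 + x q^6)(1 − x^2 q^9) F_2(x q^6, q). -/

import Mathlib

/-- A strict partition: a strictly decreasing list of positive integers
(the empty partition is allowed). -/
structure StrictPartition where
  parts : List ℕ
  sorted : parts.Pairwise (· > ·)
  pos : ∀ p ∈ parts, 0 < p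

namespace StrictPartition

/-- The number of parts (rows) of a strict partition. -/
def length (l : StrictPartition) : ℕ := l.parts.length

/-- The number of boxes `(j+1, k)` with `1 ≤ k ≤ p` in row `j+1` (`j` is 0-indexed)
whose residue `k - (j+1)` is congruent to `i` modulo `2`. -/
def rowResidueCount (i j p : ℕ) : ℕ :=
  ((Finset.Icc 1 p).filter fun k => (k + j + 1 + i) % 2 = 0).card

/-- `|λ|_i`: the number of boxes of `λ`, counting twice each box whose residue
`(column) - (row)` is congruent to `i` modulo `2`. -/
def wt (i : ℕ) (l : StrictPartition) : ℕ :=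
  l.parts.sum + ∑ j ∈ Finset.range l.parts.length, rowResidueCount i j (l.parts.getD j 0)

end StrictPartition

/-!
Write `G_b(m)(x)` for the part of `F₂(x,q)` coming from strict partitions with `ℓ(λ) ≡ b (mod 2)`
and all parts at least `m`. Deleting the smallest part `m`, i.e. the last row, whose number of
doubly counted boxes depends only on the parity of its index, gives
`G_b(m) = G_b(m+1) + x q^(m + ⌊(m+b)/2⌋) G_{1-b}(m+1)`; subtracting `2` from every part removes
from each row two boxes of opposite residues, so `G_b(m+2)(x) = G_b(m)(xq³)`. Hence
`(G_0(1), G_1(1))(x)` is an explicit `2 × 2` matrix applied to `(G_0(1), G_1(1))(xq³)`, so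
`F₂(x)`, `F₂(xq³)` and `F₂(xq⁶)` are three linear forms in the two unknowns `G_b(1)(xq⁶)`, and the
identity is the linear relation between them.
-/

namespace Nat

theorem card_filter_Icc_add_mod_two_eq_zero (c p : ℕ) :
    ((Finset.Icc 1 p).filter fun k => (k + c) % 2 = 0).card = (p + c % 2) / 2 := by
  induction p with
  | zero => simp
  | succ p ih =>
    rw [← Finset.insert_Icc_right_eq_Icc_add_one (by omega), Finset.filter_insert]
    split_ifs with h
    · rw [Finset.card_insert_of_notMem (by simp), ih]; omega
    · rw [ih]; omega

end Nat

namespace StrictPartition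

@[ext]
theorem ext {l l' : StrictPartition} (h : l.parts = l'.parts) : l = l' := by
  cases l; cases l'; simpa using h

theorem toFinset_parts_injective :
    Function.Injective fun l : StrictPartition => l.parts.toFinset :=
  fun l l' h => ext <| l.sorted.eq_of_mem_iff l'.sorted fun p => by
    simpa using congrArg (p ∈ ·) h

theorem rowResidueCount_eq (i j p : ℕ) : rowResidueCount i j p = (p + (j + 1 + i) % 2) / 2 := by
  simp only [rowResidueCount, add_assoc]
  exact Nat.card_filter_Icc_add_mod_two_eq_zero _ p

theorem sum_parts_le_wt (i : ℕ) (l : StrictPartition) : l.parts.sum ≤ l.wt i :=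
  Nat.le_add_right _ _

theorem prod_toFinset_parts (t r : ℝ) (l : StrictPartition) :
    ∏ p ∈ l.parts.toFinset, t * r ^ p = t ^ l.length * r ^ l.parts.sum := by
  rw [Finset.prod_mul_distrib, Finset.prod_const, Finset.prod_pow_eq_pow_sum,
    List.toFinset_card_of_nodup l.sorted.nodup, List.sum_toFinset _ l.sorted.nodup]
  simp [length]

theorem summable_pow_length_mul_pow_wt (i : ℕ) {t r : ℝ} (ht : 0 ≤ t) (hr₀ : 0 ≤ r)
    (hr₁ : r < 1) : Summable fun l : StrictPartition => t ^ l.length * r ^ l.wt i := by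
  have hprod : Summable fun s : Finset ℕ => ∏ p ∈ s, t * r ^ p :=
    summable_finsetProd_of_summable_nonneg (fun p => by positivity)
      ((summable_geometric_of_lt_one hr₀ hr₁).mul_left t)
  refine (hprod.comp_injective toFinset_parts_injective).of_nonneg_of_le
    (fun l => by positivity) fun l => ?_
  rw [Function.comp_apply, prod_toFinset_parts]
  exact mul_le_mul_of_nonneg_left (pow_le_pow_of_le_one hr₀ hr₁.le (sum_parts_le_wt i l))
    (by positivity)

theorem summable_norm_pow_length_mul_pow_wt (i : ℕ) (x : ℂ) {q : ℂ} (hq : ‖q‖ < 1) :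
    Summable fun l : StrictPartition => ‖x ^ l.length * q ^ l.wt i‖ := by
  simpa only [norm_mul, norm_pow] using
    summable_pow_length_mul_pow_wt i (norm_nonneg x) (norm_nonneg q) hq

def shift (l : StrictPartition) : StrictPartition where
  parts := l.parts.map (· + 2)
  sorted := l.sorted.map _ fun _ _ h => by omega
  pos := by simp

@[simp]
theorem length_shift (l : StrictPartition) : l.shift.length = l.length :=
  List.length_map _

theorem shift_injective : Function.Injective shift := fun _ _ h =>
  ext <| List.map_injective_iff.2 (add_left_injective 2) (congrArg parts h)

theorem forall_mem_shift_le_iff {l : StrictPartition} {m : ℕ} :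
    (∀ p ∈ l.shift.parts, m + 2 ≤ p) ↔ ∀ p ∈ l.parts, m ≤ p := by
  simp [shift]

theorem wt_shift (i : ℕ) (l : StrictPartition) : l.shift.wt i = l.wt i + 3 * l.length := by
  have hsum : (l.parts.map (· + 2)).sum = l.parts.sum + 2 * l.length := by
    simp [List.sum_map_add, length, mul_comm]
  have hrow : ∀ j ∈ Finset.range l.parts.length,
      rowResidueCount i j (l.shift.parts.getD j 0) =
        rowResidueCount i j (l.parts.getD j 0) + 1 := by
    intro j hj
    rw [Finset.mem_range] at hj
    simp only [shift, List.getD_eq_getElem?_getD, List.getElem?_map, List.getElem?_eq_getElem hj,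
      Option.map_some, Option.getD_some, rowResidueCount_eq]
    omega
  have hlen : l.shift.parts.length = l.parts.length := List.length_map _
  rw [wt, wt, hlen, Finset.sum_congr rfl hrow, Finset.sum_add_distrib, Finset.sum_const,
    Finset.card_range, shift, hsum]
  simp only [length, smul_eq_mul, mul_one]
  omega

theorem mem_range_shift_of_three_le {l : StrictPartition} (h : ∀ p ∈ l.parts, 3 ≤ p) :
    l ∈ Set.range shift := by
  refine ⟨⟨l.parts.map (· - 2), ?_, ?_⟩, ext ?_⟩
  · exact List.pairwise_map.2 <| l.sorted.imp_of_mem fun ha hb hab => by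
      have := h _ ha; have := h _ hb; omega
  · simp only [List.mem_map, forall_exists_index, and_imp, forall_apply_eq_imp_iff₂]
    intro a ha; have := h a ha; omega
  · simp only [shift, List.map_map]
    conv_rhs => rw [← List.map_id l.parts]
    exact List.map_congr_left fun a ha => by have := h a ha; simp; omega

section Snoc

def snoc (m : ℕ) (hm : 0 < m) (μ : {l : StrictPartition // ∀ p ∈ l.parts, m < p}) :
    StrictPartition where
  parts := μ.1.parts ++ [m]
  sorted := List.pairwise_append.2 ⟨μ.1.sorted, List.pairwise_singleton _ _,
    fun a ha b hb => (List.mem_singleton.1 hb).symm ▸ μ.2 a ha⟩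
  pos p hp := by
    rcases List.mem_append.1 hp with hp | hp
    · exact μ.1.pos p hp
    · exact (List.mem_singleton.1 hp).symm ▸ hm

variable {m : ℕ} {hm : 0 < m}

@[simp]
theorem length_snoc (μ) : (snoc m hm μ).length = μ.1.length + 1 :=
  List.length_append

theorem snoc_injective : Function.Injective (snoc m hm) := fun _ _ h =>
  Subtype.ext <| ext <| List.append_cancel_right (congrArg parts h)

theorem forall_le_and_mem_snoc (μ) :
    (∀ p ∈ (snoc m hm μ).parts, m ≤ p) ∧ m ∈ (snoc m hm μ).parts := by
  simp only [snoc, List.mem_append, List.mem_singleton, or_true, and_true]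
  rintro p (hp | rfl)
  exacts [(μ.2 p hp).le, le_rfl]

theorem wt_snoc (i : ℕ) (μ) :
    (snoc m hm μ).wt i = μ.1.wt i + m + rowResidueCount i μ.1.length m := by
  have hlen : (snoc m hm μ).parts.length = μ.1.parts.length + 1 := List.length_append
  have hlast : (snoc m hm μ).parts.getD μ.1.parts.length 0 = m := by
    simp [snoc]
  have hrow : ∀ j ∈ Finset.range μ.1.parts.length,
      rowResidueCount i j ((snoc m hm μ).parts.getD j 0) =
        rowResidueCount i j (μ.1.parts.getD j 0) :=
    fun j hj => by rw [snoc, List.getD_append _ _ _ _ (Finset.mem_range.1 hj)]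
  rw [wt, wt, hlen, Finset.sum_range_succ, Finset.sum_congr rfl hrow, hlast, snoc,
    List.sum_append, List.sum_singleton, length]
  omega

theorem mem_range_snoc_of_le_of_mem {l : StrictPartition} (hle : ∀ p ∈ l.parts, m ≤ p)
    (hmem : m ∈ l.parts) :
    l ∈ Set.range (snoc m hm) := by
  have hne : l.parts ≠ [] := List.ne_nil_of_mem hmem
  have hsplit := List.dropLast_append_getLast hne
  have hsorted := l.sorted
  rw [← hsplit, List.pairwise_append] at hsorted
  have hlast : l.parts.getLast hne = m := by
    rcases List.mem_append.1 (hsplit ▸ hmem) with h | h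
    · have := hsorted.2.2 m h _ (List.mem_singleton_self _)
      have := hle _ (List.getLast_mem hne)
      omega
    · exact (List.mem_singleton.1 h).symm
  refine ⟨⟨⟨l.parts.dropLast, hsorted.1, fun p hp => l.pos p (List.dropLast_subset _ hp)⟩,
    fun p hp => hlast ▸ hsorted.2.2 p hp _ (List.mem_singleton_self _)⟩, ext ?_⟩
  simp only [snoc]
  rw [← hlast]
  exact hsplit

end Snoc

variable (i : ℕ) (x q : ℂ)

theorem summable_ite (hq : ‖q‖ < 1) (P : StrictPartition → Prop) [DecidablePred P] :
    Summable fun l : StrictPartition => if P l then x ^ l.length * q ^ l.wt i else 0 :=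
  .of_norm_bounded (summable_norm_pow_length_mul_pow_wt i x hq) fun l => by
    split_ifs <;> simp; positivity

noncomputable def gfParityGE (b m : ℕ) : ℂ :=
  ∑' l : StrictPartition,
    if l.length % 2 = b ∧ ∀ p ∈ l.parts, m ≤ p then x ^ l.length * q ^ l.wt i else 0

theorem tsum_eq_gfParityGE_zero_add_one (hq : ‖q‖ < 1) :
    ∑' l : StrictPartition, x ^ l.length * q ^ l.wt i =
      gfParityGE i x q 0 1 + gfParityGE i x q 1 1 := by
  rw [gfParityGE, gfParityGE,
    ← (summable_ite i x q hq _).tsum_add (summable_ite i x q hq _)]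
  refine tsum_congr fun l => ?_
  rcases Nat.mod_two_eq_zero_or_one l.length with h | h
  · rw [if_pos ⟨h, l.pos⟩, if_neg fun h' => by omega, add_zero]
  · rw [if_neg fun h' => by omega, if_pos ⟨h, l.pos⟩, zero_add]

theorem gfParityGE_shift {m : ℕ} (hm : 0 < m) (b : ℕ) :
    gfParityGE i x q b (m + 2) = gfParityGE i (x * q ^ 3) q b m := by
  rw [gfParityGE, ← shift_injective.tsum_eq]
  · refine tsum_congr fun μ => ?_
    simp only [length_shift, forall_mem_shift_le_iff, wt_shift]
    split_ifs
    · ring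
    · rfl
  · intro l hl
    by_contra hrange
    refine hl (if_neg fun h => hrange (mem_range_shift_of_three_le fun p hp => ?_))
    have := h.2 p hp
    omega

theorem gfParityGE_eq_add_tsum_mem (hq : ‖q‖ < 1) (b m : ℕ) :
    gfParityGE i x q b m = gfParityGE i x q b (m + 1) +
      ∑' l : StrictPartition, if l.length % 2 = b ∧ (∀ p ∈ l.parts, m ≤ p) ∧ m ∈ l.parts
        then x ^ l.length * q ^ l.wt i else 0 := by
  rw [gfParityGE, gfParityGE,
    ← (summable_ite i x q hq _).tsum_add (summable_ite i x q hq _)]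
  refine tsum_congr fun l => ?_
  by_cases hmem : m ∈ l.parts
  · have : ¬ ∀ p ∈ l.parts, m + 1 ≤ p := fun h => by have := h m hmem; omega
    simp only [hmem, this, and_true, and_false, if_false, zero_add]
  · have : (∀ p ∈ l.parts, m + 1 ≤ p) ↔ ∀ p ∈ l.parts, m ≤ p :=
      forall₂_congr fun p hp => by have : p ≠ m := fun h => hmem (h ▸ hp); omega
    simp only [hmem, this, and_false, if_false, add_zero]

theorem tsum_mem_eq_mul_gfParityGE {b m : ℕ} (hb : b < 2) (hm : 0 < m) :
    (∑' l : StrictPartition, if l.length % 2 = b ∧ (∀ p ∈ l.parts, m ≤ p) ∧ m ∈ l.parts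
        then x ^ l.length * q ^ l.wt i else 0) =
      x * q ^ (m + (m + (b + i) % 2) / 2) * gfParityGE i x q ((b + 1) % 2) (m + 1) := by
  rw [← (snoc_injective (hm := hm)).tsum_eq]
  · set c := x * q ^ (m + (m + (b + i) % 2) / 2)
    have hterm (μ : {l : StrictPartition // ∀ p ∈ l.parts, m < p}) :
        (if (snoc m hm μ).length % 2 = b ∧ (∀ p ∈ (snoc m hm μ).parts, m ≤ p) ∧
          m ∈ (snoc m hm μ).parts then x ^ (snoc m hm μ).length * q ^ (snoc m hm μ).wt i else 0) =
        c * if μ.1.length % 2 = (b + 1) % 2 then x ^ μ.1.length * q ^ μ.1.wt i else 0 := by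
      by_cases h : μ.1.length % 2 = (b + 1) % 2
      · rw [if_pos ⟨by rw [length_snoc]; omega, forall_le_and_mem_snoc μ⟩, if_pos h, length_snoc,
          wt_snoc, rowResidueCount_eq, show (μ.1.length + 1 + i) % 2 = (b + i) % 2 by omega]
        ring
      · rw [if_neg fun h' => h (by rw [length_snoc] at h'; omega), if_neg h, mul_zero]
    refine (tsum_congr hterm).trans ?_
    rw [tsum_mul_left, gfParityGE]
    refine congrArg (c * ·) ((tsum_subtype {l : StrictPartition | ∀ p ∈ l.parts, m < p}
      fun l => if l.length % 2 = (b + 1) % 2 then x ^ l.length * q ^ l.wt i else 0).trans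
      (tsum_congr fun l => ?_))
    rw [Set.indicator_apply, ← ite_and]
    exact if_congr and_comm rfl rfl
  · intro l hl
    by_contra hrange
    exact hl (if_neg fun h => hrange (mem_range_snoc_of_le_of_mem h.2.1 h.2.2))

theorem gfParityGE_eq_add_mul (hq : ‖q‖ < 1) {b m : ℕ} (hb : b < 2) (hm : 0 < m) :
    gfParityGE i x q b m = gfParityGE i x q b (m + 1) +
      x * q ^ (m + (m + (b + i) % 2) / 2) * gfParityGE i x q ((b + 1) % 2) (m + 1) := by
  rw [gfParityGE_eq_add_tsum_mem i x q hq, tsum_mem_eq_mul_gfParityGE i x q hb hm]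

theorem gfParityGE_two_eq (hq : ‖q‖ < 1) :
    gfParityGE 2 x q 0 1 = (1 + x ^ 2 * q ^ 4) * gfParityGE 2 (x * q ^ 3) q 0 1 +
        (x * q + x * q ^ 3) * gfParityGE 2 (x * q ^ 3) q 1 1 ∧
      gfParityGE 2 x q 1 1 = (x * q ^ 2 + x * q ^ 3) * gfParityGE 2 (x * q ^ 3) q 0 1 +
        (1 + x ^ 2 * q ^ 5) * gfParityGE 2 (x * q ^ 3) q 1 1 := by
  have h₀₁ := gfParityGE_eq_add_mul 2 x q hq (b := 0) (m := 1) (by norm_num) one_pos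
  have h₁₁ := gfParityGE_eq_add_mul 2 x q hq (b := 1) (m := 1) (by norm_num) one_pos
  have h₀₂ := gfParityGE_eq_add_mul 2 x q hq (b := 0) (m := 2) (by norm_num) two_pos
  have h₁₂ := gfParityGE_eq_add_mul 2 x q hq (b := 1) (m := 2) (by norm_num) two_pos
  norm_num at h₀₁ h₁₁ h₀₂ h₁₂
  rw [h₀₁, h₁₁, h₀₂, h₁₂, gfParityGE_shift 2 x q one_pos 0, gfParityGE_shift 2 x q one_pos 1]
  constructor <;> ring

end StrictPartition

open StrictPartition in
/-- **The `q`-difference equation \eqref{qd2} for `F₂(x,q) = ∑_{λ ∈ STR} x^{ℓ(λ)} q^{|λ|₂}`.**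
For `|q| < 1` the sum converges absolutely and
`q³ F₂(x,q) = (1+q³-xq³+xq⁶+x²q⁷+x²q⁸) F₂(xq³,q) - (1-xq³)(1+xq⁶)(1-x²q⁹) F₂(xq⁶,q)`. -/
theorem qdifference_F_two
    (q x : ℂ) (hq : ‖q‖ < 1) :
    Summable (fun p : StrictPartition => ‖x ^ p.length * q ^ p.wt 2‖) ∧
    q ^ 3 * (∑' p : StrictPartition, x ^ p.length * q ^ p.wt 2) =
      (1 + q ^ 3 - x * q ^ 3 + x * q ^ 6 + x ^ 2 * q ^ 7 + x ^ 2 * q ^ 8) *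
        (∑' p : StrictPartition, (x * q ^ 3) ^ p.length * q ^ p.wt 2)
      - (1 - x * q ^ 3) * (1 + x * q ^ 6) * (1 - x ^ 2 * q ^ 9) *
        (∑' p : StrictPartition, (x * q ^ 6) ^ p.length * q ^ p.wt 2) := by
  refine ⟨summable_norm_pow_length_mul_pow_wt 2 x hq, ?_⟩
  obtain ⟨h₀, h₁⟩ := gfParityGE_two_eq x q hq
  obtain ⟨h₀', h₁'⟩ := gfParityGE_two_eq (x * q ^ 3) q hq
  rw [tsum_eq_gfParityGE_zero_add_one 2 x q hq, tsum_eq_gfParityGE_zero_add_one 2 _ q hq,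
    tsum_eq_gfParityGE_zero_add_one 2 _ q hq, h₀, h₁, h₀', h₁',
    show x * q ^ 3 * q ^ 3 = x * q ^ 6 by ring]
  ring
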